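/- If f : F_2^n → {-1,1} satisfies ‖f‖_{U3} ≥ ε, then E_{x,y} Σ_{α,β} f̂_x^2(α) f̂_y^2(β) f̂_{x+y}^2(α+β) ≥ ε', where ε' can be taken as ε^{24} (an absolute power of ε). -/

import Mathlib

open Finset

/-- The character `(-1)^{⟨α,x⟩}` on `F_2^n`. -/
noncomputable def chi {n : ℕ} (α x : Fin n → ZMod 2) : ℝ :=
  (-1 : ℝ) ^ ((∑ i, α i * x i : ZMod 2)).val

/-- Fourier coefficient `f̂(α) = E_x f(x)(-1)^{⟨α,x⟩}`. -/
noncomputable def fCoeff {n : ℕ} (f : (Fin n → ZMod 2) → ℝ) (α : Fin n → ZMod 2) : ℝ :=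
  (∑ x, f x * chi α x) / 2 ^ n

/-- Discrete derivative `f_y(x) = f(x) f(x+y)`. -/
noncomputable def dderiv {n : ℕ} (f : (Fin n → ZMod 2) → ℝ) (y : Fin n → ZMod 2) :
    (Fin n → ZMod 2) → ℝ := fun x => f x * f (x + y)

/-- `‖f‖_{U_d}^{2^d} = E_{x,y_1,…,y_d} ∏_{S ⊆ [d]} f(x + Σ_{i∈S} y_i)`. -/
noncomputable def gowersPow {n : ℕ} (d : ℕ) (f : (Fin n → ZMod 2) → ℝ) : ℝ :=
  (∑ x : Fin n → ZMod 2, ∑ y : Fin d → Fin n → ZMod 2,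
      ∏ S : Finset (Fin d), f (x + ∑ i ∈ S, y i)) / ((2 : ℝ) ^ n) ^ (d + 1)

/-- The Gowers uniformity norm `‖f‖_{U_d}`. -/
noncomputable def gowersNorm {n : ℕ} (d : ℕ) (f : (Fin n → ZMod 2) → ℝ) : ℝ :=
  gowersPow d f ^ ((1 : ℝ) / 2 ^ d)

/-!
Let `C_y = f_y ∗ f_y`, so that `f̂_y² = Ĉ_y` and `C_y(w) = E_u f(u) f(u+y) f(u+w) f(u+y+w)`,
which is symmetric in `y` and `w`. By Parseval `E_y Σ_α f̂_y⁴ = E_y E_w C_y(w)² = ‖f‖_{U³}⁸`, and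
by Fourier inversion together with `C_x(w) = C_w(x)` the left side of the claim equals
`E_y Σ_α f̂_y⁶` (the weak linearity identity). Since `Σ_α f̂_y² = 1`, Cauchy–Schwarz gives
`(Σ_α f̂_y⁴)² ≤ Σ_α f̂_y⁶`, hence the left side is at least
`(E_y Σ_α f̂_y⁴)² = ‖f‖_{U³}¹⁶ ≥ ε¹⁶ ≥ ε²⁴`, the last step because `ε ≤ ‖f‖_{U³} ≤ 1`.
-/

lemma neg_one_pow_val_add (a b : ZMod 2) :
    (-1 : ℝ) ^ (a + b).val = (-1) ^ a.val * (-1) ^ b.val := by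
  rw [ZMod.val_add, ← neg_one_pow_eq_pow_mod_two, pow_add]

lemma sum_fin_three_arrow {G M : Type*} [Fintype G] [AddCommMonoid M] (F : (Fin 3 → G) → M) :
    ∑ y, F y = ∑ a, ∑ b, ∑ c, F ![a, b, c] := by
  simp only [← (Fin.consEquiv fun _ => G).sum_comp, Fintype.sum_prod_type, Fintype.sum_unique]
  rfl

lemma prod_subsets_fin_three {G M : Type*} [AddCommMonoid G] [CommMonoid M] (f : G → M)
    (x a b c : G) :
    ∏ S : Finset (Fin 3), f (x + ∑ i ∈ S, ![a, b, c] i)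
      = f x * f (x + a) * f (x + b) * f (x + c) * f (x + (a + b)) * f (x + (a + c)) *
          f (x + (b + c)) * f (x + (a + (b + c))) := by
  rw [show (univ : Finset (Finset (Fin 3)))
      = {∅, {0}, {1}, {2}, {0, 1}, {0, 2}, {1, 2}, {0, 1, 2}} by decide]
  simp +decide [prod_insert, sum_insert, mul_assoc]

section PowerSums

variable {ι R : Type*} [CommRing R] [LinearOrder R] [IsStrictOrderedRing R]

lemma sq_sum_pow_four_le (s : Finset ι) (p : ι → R) :
    (∑ i ∈ s, p i ^ 4) ^ 2 ≤ (∑ i ∈ s, p i ^ 2) * ∑ i ∈ s, p i ^ 6 := by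
  convert sum_mul_sq_le_sq_mul_sq s p (fun i => p i ^ 3) using 3 <;> ring

lemma sum_pow_four_le_sq_sum_sq (s : Finset ι) (p : ι → R) :
    ∑ i ∈ s, p i ^ 4 ≤ (∑ i ∈ s, p i ^ 2) ^ 2 := by
  convert sum_sq_le_sq_sum_of_nonneg (s := s) (f := fun i => p i ^ 2) fun i _ => sq_nonneg _
    using 2 with i
  ring

end PowerSums

section BooleanCube

variable {n : ℕ}

lemma neg_eq_self_of_cube (x : Fin n → ZMod 2) : -x = x :=
  funext fun i => ZMod.neg_eq_self_mod_two (x i)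

lemma add_add_cancel_left_of_cube (x y : Fin n → ZMod 2) : x + (x + y) = y := by
  nth_rewrite 1 [← neg_eq_self_of_cube x]
  exact neg_add_cancel_left x y

lemma chi_zero_right (α : Fin n → ZMod 2) : chi α 0 = 1 := by
  simp [chi]

lemma chi_add_right (α x y : Fin n → ZMod 2) : chi α (x + y) = chi α x * chi α y := by
  simp only [chi, Pi.add_apply, mul_add, sum_add_distrib, neg_one_pow_val_add]

lemma chi_add_left (α β x : Fin n → ZMod 2) : chi (α + β) x = chi α x * chi β x := by
  simp only [chi, Pi.add_apply, add_mul, sum_add_distrib, neg_one_pow_val_add]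

lemma chi_single_one_left (i : Fin n) (x : Fin n → ZMod 2) :
    chi (Pi.single i 1) x = (-1) ^ (x i).val := by
  simp [chi, Pi.single_apply]

lemma sum_chi (x : Fin n → ZMod 2) : ∑ α, chi α x = if x = 0 then 2 ^ n else 0 := by
  split_ifs with hx
  · simp [hx, chi_zero_right]
  · obtain ⟨i, hi⟩ := Function.ne_iff.mp hx
    have hxi : x i = 1 := ((by decide : ∀ a : ZMod 2, a = 0 ∨ a = 1) (x i)).resolve_left hi
    have hflip : chi (Pi.single i 1) x = -1 := by
      rw [chi_single_one_left, hxi, ZMod.val_one, pow_one]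
    -- translating `α` by `Pi.single i 1` flips the sign of every term
    have hneg : ∑ α, chi α x = -∑ α, chi α x := by
      calc ∑ α, chi α x = ∑ α, chi (α + Pi.single i 1) x :=
            (Fintype.sum_equiv (Equiv.addRight (Pi.single i 1)) _ _ fun _ => rfl).symm
        _ = -∑ α, chi α x := by simp [chi_add_left, hflip]
    linarith

lemma sum_fCoeff_mul_chi (g : (Fin n → ZMod 2) → ℝ) (x : Fin n → ZMod 2) :
    ∑ α, fCoeff g α * chi α x = g x := by
  have hsum : ∀ y, ∑ α, chi α y * chi α x = if y = x then 2 ^ n else 0 := by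
    intro y
    simp only [← chi_add_right, sum_chi, add_eq_zero_iff_eq_neg, neg_eq_self_of_cube]
  simp only [fCoeff, div_mul_eq_mul_div, ← sum_div, sum_mul, mul_assoc]
  rw [sum_comm]
  simp only [← mul_sum, hsum, mul_ite, mul_zero, sum_ite_eq', mem_univ, if_true]
  field_simp

lemma sum_fCoeff_mul_sum (g c : (Fin n → ZMod 2) → ℝ) :
    ∑ α, fCoeff g α * ∑ x, c x * chi α x = ∑ x, c x * g x := by
  simp only [mul_sum]
  rw [sum_comm]
  simp only [mul_left_comm (fCoeff g _), ← mul_sum, sum_fCoeff_mul_chi]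

lemma sum_fCoeff_mul_fCoeff (g h : (Fin n → ZMod 2) → ℝ) :
    ∑ α, fCoeff g α * fCoeff h α = (∑ x, g x * h x) / 2 ^ n := by
  have hh : ∀ α, fCoeff h α = (∑ x, h x * chi α x) / 2 ^ n := fun _ => rfl
  simp only [hh, mul_div_assoc', ← sum_div, sum_fCoeff_mul_sum, mul_comm]

-- In characteristic two `u + w = w - u`: this is at once the convolution and the correlation.
noncomputable def convolve (g h : (Fin n → ZMod 2) → ℝ) (w : Fin n → ZMod 2) : ℝ :=
  (∑ u, g u * h (u + w)) / 2 ^ n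

lemma fCoeff_convolve (g h : (Fin n → ZMod 2) → ℝ) (α : Fin n → ZMod 2) :
    fCoeff (convolve g h) α = fCoeff g α * fCoeff h α := by
  have htranslate : ∀ u, ∑ w, h (u + w) * chi α w = chi α u * ∑ v, h v * chi α v := by
    intro u
    rw [Fintype.sum_equiv (Equiv.addLeft u) _ (fun v => h v * chi α (u + v)) fun w => by
      simp only [Equiv.coe_addLeft, add_add_cancel_left_of_cube]]
    simp only [chi_add_right, mul_sum]
    exact sum_congr rfl fun v _ => by ring
  calc fCoeff (convolve g h) α = (∑ u, g u * ∑ w, h (u + w) * chi α w) / 2 ^ n / 2 ^ n := by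
        simp only [fCoeff, convolve, div_mul_eq_mul_div, ← sum_div, sum_mul, mul_sum, mul_assoc]
        rw [sum_comm]
    _ = (∑ u, g u * chi α u) * (∑ v, h v * chi α v) / 2 ^ n / 2 ^ n := by
        simp only [htranslate, sum_mul, mul_assoc]
    _ = fCoeff g α * fCoeff h α := by
        rw [fCoeff, fCoeff]
        ring

lemma sum_fCoeff_mul_fCoeff_mul_fCoeff (g h k : (Fin n → ZMod 2) → ℝ) :
    ∑ α, fCoeff g α * fCoeff h α * fCoeff k α
      = (∑ x, ∑ y, g x * h (x + y) * k y) / (2 ^ n) ^ 2 := by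
  simp only [← fCoeff_convolve g h, sum_fCoeff_mul_fCoeff, convolve, sum_mul, sum_div]
  rw [sum_comm]
  exact sum_congr rfl fun x _ => sum_congr rfl fun y _ => by ring

lemma sum_fCoeff_mul_fCoeff_mul_fCoeff_add (g h k : (Fin n → ZMod 2) → ℝ) :
    ∑ α, ∑ β, fCoeff g α * fCoeff h β * fCoeff k (α + β)
      = (∑ x, g x * h x * k x) / 2 ^ n := by
  have hk : ∀ α β, fCoeff k (α + β) = ∑ x, k x * chi α x / 2 ^ n * chi β x := by
    intro α β
    simp only [fCoeff, chi_add_left, sum_div]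
    exact sum_congr rfl fun x _ => by ring
  have hβ : ∀ α, ∑ β, fCoeff g α * fCoeff h β * fCoeff k (α + β)
      = fCoeff g α * ∑ x, (h x * k x / 2 ^ n) * chi α x := by
    intro α
    simp only [hk, mul_assoc (fCoeff g α), ← mul_sum, sum_fCoeff_mul_sum]
    exact congrArg _ (sum_congr rfl fun x _ => by ring)
  simp only [hβ, sum_fCoeff_mul_sum, sum_div]
  exact sum_congr rfl fun x _ => by ring

lemma sum_fCoeff_sq_of_sq_eq_one {g : (Fin n → ZMod 2) → ℝ} (hg : ∀ x, g x ^ 2 = 1) :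
    ∑ α, fCoeff g α ^ 2 = 1 := by
  simp only [sq, sum_fCoeff_mul_fCoeff]
  simp [← sq, hg]

lemma gowersPow_three_eq (f : (Fin n → ZMod 2) → ℝ) :
    gowersPow 3 f = (∑ x, ∑ a, ∑ b, ∑ c, f x * f (x + a) * f (x + b) * f (x + c) *
      f (x + (a + b)) * f (x + (a + c)) * f (x + (b + c)) * f (x + (a + (b + c)))) /
      (2 ^ n) ^ 4 := by
  simp only [gowersPow, sum_fin_three_arrow, prod_subsets_fin_three]

lemma pow_two_pow_le_gowersPow {d : ℕ} {f : (Fin n → ZMod 2) → ℝ} {ε : ℝ} (hε : 0 ≤ ε)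
    (h0 : 0 ≤ gowersPow d f) (h : ε ≤ gowersNorm d f) : ε ^ 2 ^ d ≤ gowersPow d f := by
  rw [gowersNorm, one_div, Real.le_rpow_inv_iff_of_pos hε h0 (by positivity)] at h
  exact_mod_cast h

lemma dderiv_sq_eq_one {f : (Fin n → ZMod 2) → ℝ} (hf : ∀ x, f x ^ 2 = 1) (y x : Fin n → ZMod 2) :
    dderiv f y x ^ 2 = 1 := by
  rw [dderiv, mul_pow, hf, hf, one_mul]

noncomputable def derivCorr (f : (Fin n → ZMod 2) → ℝ) (y : Fin n → ZMod 2) :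
    (Fin n → ZMod 2) → ℝ :=
  convolve (dderiv f y) (dderiv f y)

lemma fCoeff_dderiv_sq (f : (Fin n → ZMod 2) → ℝ) (y α : Fin n → ZMod 2) :
    fCoeff (dderiv f y) α ^ 2 = fCoeff (derivCorr f y) α := by
  rw [derivCorr, fCoeff_convolve, sq]

lemma derivCorr_comm (f : (Fin n → ZMod 2) → ℝ) (y w : Fin n → ZMod 2) :
    derivCorr f y w = derivCorr f w y := by
  simp only [derivCorr, convolve, dderiv]
  congr 1
  exact sum_congr rfl fun u _ => by rw [add_right_comm u w y]; ring

lemma sum_sum_derivCorr_sq (f : (Fin n → ZMod 2) → ℝ) :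
    ∑ y, ∑ w, derivCorr f y w ^ 2 = (2 ^ n) ^ 2 * gowersPow 3 f := by
  have hsq : ∀ y w, derivCorr f y w ^ 2 = (∑ u, ∑ c, f u * f (u + y) * f (u + w) * f (u + c) *
      f (u + (y + w)) * f (u + (y + c)) * f (u + (w + c)) * f (u + (y + (w + c)))) /
      (2 ^ n) ^ 2 := by
    intro y w
    rw [derivCorr, convolve, div_pow, sq, sum_mul_sum]
    congr 1
    refine sum_congr rfl fun u _ => (Fintype.sum_equiv (Equiv.addLeft u) _ _ fun c => ?_).symm
    simp only [dderiv, Equiv.coe_addLeft]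
    ring_nf
  have hN : (2 : ℝ) ^ n ≠ 0 := by positivity
  simp only [hsq, gowersPow_three_eq, ← sum_div]
  rw [sum_congr rfl fun y _ => sum_comm, sum_comm]
  field_simp

lemma sum_sum_fCoeff_dderiv_pow_four (f : (Fin n → ZMod 2) → ℝ) :
    ∑ y, ∑ α, fCoeff (dderiv f y) α ^ 4 = 2 ^ n * gowersPow 3 f := by
  have h4 : ∀ y α, fCoeff (dderiv f y) α ^ 4
      = fCoeff (derivCorr f y) α * fCoeff (derivCorr f y) α := by
    intro y α
    rw [← fCoeff_dderiv_sq]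
    ring
  have hN : (2 : ℝ) ^ n ≠ 0 := by positivity
  simp only [h4, sum_fCoeff_mul_fCoeff]
  simp only [← sq, ← sum_div, sum_sum_derivCorr_sq]
  field_simp

lemma sum_fCoeff_dderiv_pow_six (f : (Fin n → ZMod 2) → ℝ) (y : Fin n → ZMod 2) :
    ∑ α, fCoeff (dderiv f y) α ^ 6
      = (∑ x, ∑ z, derivCorr f y x * derivCorr f y (x + z) * derivCorr f y z) / (2 ^ n) ^ 2 := by
  rw [← sum_fCoeff_mul_fCoeff_mul_fCoeff]
  exact sum_congr rfl fun α _ => by rw [← fCoeff_dderiv_sq]; ring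

theorem weak_linearity_identity (f : (Fin n → ZMod 2) → ℝ) :
    ∑ x, ∑ y, ∑ α, ∑ β, fCoeff (dderiv f x) α ^ 2 * fCoeff (dderiv f y) β ^ 2 *
        fCoeff (dderiv f (x + y)) (α + β) ^ 2
      = 2 ^ n * ∑ w, ∑ α, fCoeff (dderiv f w) α ^ 6 := by
  have hsymm : ∑ x, ∑ y, ∑ w, derivCorr f x w * derivCorr f y w * derivCorr f (x + y) w
      = ∑ w, ∑ x, ∑ y, derivCorr f w x * derivCorr f w (x + y) * derivCorr f w y := by
    rw [sum_congr rfl fun x _ => sum_comm, sum_comm]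
    refine sum_congr rfl fun w _ => sum_congr rfl fun x _ => sum_congr rfl fun y _ => ?_
    rw [derivCorr_comm f x, derivCorr_comm f y, derivCorr_comm f (x + y)]
    ring
  have hN : (2 : ℝ) ^ n ≠ 0 := by positivity
  simp only [fCoeff_dderiv_sq, sum_fCoeff_mul_fCoeff_mul_fCoeff_add, sum_fCoeff_dderiv_pow_six,
    ← sum_div, hsymm]
  field_simp

lemma gowersPow_three_nonneg (f : (Fin n → ZMod 2) → ℝ) : 0 ≤ gowersPow 3 f := by
  have h : 0 ≤ ∑ y, ∑ α, fCoeff (dderiv f y) α ^ 4 := by positivity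
  rw [sum_sum_fCoeff_dderiv_pow_four] at h
  exact nonneg_of_mul_nonneg_right h (by positivity)

lemma gowersPow_three_le_one {f : (Fin n → ZMod 2) → ℝ} (hf : ∀ x, f x ^ 2 = 1) :
    gowersPow 3 f ≤ 1 := by
  have h : ∑ y, ∑ α, fCoeff (dderiv f y) α ^ 4 ≤ ∑ _y : Fin n → ZMod 2, (1 : ℝ) :=
    sum_le_sum fun y _ => by
      simpa [sum_fCoeff_sq_of_sq_eq_one (dderiv_sq_eq_one hf y)] using
        sum_pow_four_le_sq_sum_sq univ (fCoeff (dderiv f y))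
  rw [sum_sum_fCoeff_dderiv_pow_four] at h
  simpa using h

lemma sq_gowersPow_three_le {f : (Fin n → ZMod 2) → ℝ} (hf : ∀ x, f x ^ 2 = 1) :
    gowersPow 3 f ^ 2 ≤ (∑ y, ∑ α, fCoeff (dderiv f y) α ^ 6) / 2 ^ n := by
  have hN : (0 : ℝ) < 2 ^ n := by positivity
  have hpointwise (y : Fin n → ZMod 2) :
      (∑ α, fCoeff (dderiv f y) α ^ 4) ^ 2 ≤ ∑ α, fCoeff (dderiv f y) α ^ 6 := by
    simpa [sum_fCoeff_sq_of_sq_eq_one (dderiv_sq_eq_one hf y)] using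
      sq_sum_pow_four_le univ (fCoeff (dderiv f y))
  have hjensen : (2 ^ n * gowersPow 3 f) ^ 2 ≤ 2 ^ n * ∑ y, ∑ α, fCoeff (dderiv f y) α ^ 6 := by
    calc (2 ^ n * gowersPow 3 f) ^ 2
        = (∑ y, ∑ α, fCoeff (dderiv f y) α ^ 4) ^ 2 := by rw [sum_sum_fCoeff_dderiv_pow_four]
      _ ≤ #(univ : Finset (Fin n → ZMod 2)) * ∑ y, (∑ α, fCoeff (dderiv f y) α ^ 4) ^ 2 :=
        sq_sum_le_card_mul_sum_sq
      _ ≤ 2 ^ n * ∑ y, ∑ α, fCoeff (dderiv f y) α ^ 6 := by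
        simp only [card_univ, Fintype.card_fun, ZMod.card, Fintype.card_fin, Nat.cast_pow,
          Nat.cast_ofNat]
        gcongr with y
        exact hpointwise y
  rw [le_div_iff₀ hN]
  nlinarith

end BooleanCube

/-- If `‖f‖_{U3} ≥ ε` then
`E_{x,y} Σ_{α,β} f̂_x²(α) f̂_y²(β) f̂_{x+y}²(α+β) ≥ ε' = ε^24`. -/
theorem weak_linearity_lower_bound {n : ℕ} (f : (Fin n → ZMod 2) → ℝ)
    (hf : ∀ x, f x = 1 ∨ f x = -1) (ε : ℝ) (hε : 0 < ε)
    (h : ε ≤ gowersNorm 3 f) :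
    ε ^ 24 ≤
      (∑ x : Fin n → ZMod 2, ∑ y : Fin n → ZMod 2, ∑ α : Fin n → ZMod 2, ∑ β : Fin n → ZMod 2,
        fCoeff (dderiv f x) α ^ 2 * fCoeff (dderiv f y) β ^ 2 *
          fCoeff (dderiv f (x + y)) (α + β) ^ 2) / ((2 : ℝ) ^ n) ^ 2 := by
  have hf2 : ∀ x, f x ^ 2 = 1 := fun x => by rcases hf x with hx | hx <;> simp [hx]
  have hε8 : ε ^ 8 ≤ gowersPow 3 f := pow_two_pow_le_gowersPow hε.le (gowersPow_three_nonneg f) h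
  have hε1 : ε ≤ 1 :=
    (pow_le_one_iff_of_nonneg hε.le (by norm_num)).1 (hε8.trans (gowersPow_three_le_one hf2))
  rw [weak_linearity_identity, sq, ← div_div, mul_div_cancel_left₀ _ (by positivity)]
  calc ε ^ 24 ≤ (ε ^ 8) ^ 2 := by
        rw [← pow_mul]
        exact pow_le_pow_of_le_one hε.le hε1 (by norm_num)
    _ ≤ gowersPow 3 f ^ 2 := pow_le_pow_left₀ (by positivity) hε8 2
    _ ≤ _ := sq_gowersPow_three_le hf2
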